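/- arXiv:1910.13544 — 3 statements merged into one kernel-verified Lean document; each statement's English description precedes it below -/
import Mathlib

section
/- Let γ > 0. If v₁, v₂ ∈ H^1(0,∞) are both weak solutions of v'' − γv − v³ + u = 0 for the same u ∈ H^1(0,∞), then v₁ = v₂. -/
open MeasureTheory Set Filter

/-- Membership in `H¹(0,∞)`. -/
def InH1 (z z' : ℝ → ℝ) : Prop :=
  (∀ x ∈ Ioi (0:ℝ), HasDerivAt z (z' x) x) ∧
  MemLp z 2 (volume.restrict (Ioi (0:ℝ))) ∧
  MemLp z' 2 (volume.restrict (Ioi (0:ℝ)))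

/-!
Test both weak formulations with `w = v₁ - v₂` and subtract. The `u`-terms cancel and
what is left is `∫ (w'² + γ w² + (v₁³ - v₂³) w) = 0`, where the last term is pointwise
nonnegative because `v₁³ - v₂³ = (v₁ - v₂)(v₁² + v₁v₂ + v₂²)` and `v₁² + v₁v₂ + v₂² ≥ 0`.
Hence `w = 0` almost everywhere, and everywhere on `(0,∞)` by continuity. The integrals are
meaningful because `H¹(0,∞)` functions are bounded, which makes `v³ w` integrable.
-/

theorem cube_sub_cube_mul_sub_nonneg {R : Type*} [CommRing R] [LinearOrder R]
    [IsStrictOrderedRing R] (a b : R) : 0 ≤ (a ^ 3 - b ^ 3) * (a - b) := by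
  have key : 0 ≤ a ^ 2 + a * b + b ^ 2 := by
    nlinarith [sq_nonneg (a + b), sq_nonneg a, sq_nonneg b]
  calc 0 ≤ (a - b) ^ 2 * (a ^ 2 + a * b + b ^ 2) := by positivity
    _ = (a ^ 3 - b ^ 3) * (a - b) := by ring

theorem norm_le_integral_norm_deriv_of_integrableOn_Ioi {E : Type*} [NormedAddCommGroup E]
    [NormedSpace ℝ E] [CompleteSpace E] {f f' : ℝ → E} {a x : ℝ}
    (hderiv : ∀ t ∈ Ioi a, HasDerivAt f (f' t) t) (hf' : IntegrableOn f' (Ioi a))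
    (hf : IntegrableOn f (Ioi a)) (hx : a < x) :
    ‖f x‖ ≤ ∫ t in Ioi a, ‖f' t‖ := by
  have hsub : Ioi x ⊆ Ioi a := Ioi_subset_Ioi hx.le
  have hftc : ∫ t in Ioi x, f' t = -f x := by
    rw [integral_Ioi_of_hasDerivAt_of_tendsto' (fun t ht => hderiv t (lt_of_lt_of_le hx ht))
      (hf'.mono_set hsub) (tendsto_zero_of_hasDerivAt_of_integrableOn_Ioi hderiv hf' hf),
      zero_sub]
  calc ‖f x‖ = ‖∫ t in Ioi x, f' t‖ := by rw [hftc, norm_neg]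
    _ ≤ ∫ t in Ioi x, ‖f' t‖ := norm_integral_le_integral_norm _
    _ ≤ ∫ t in Ioi a, ‖f' t‖ :=
      setIntegral_mono_set hf'.norm (Eventually.of_forall fun _ => norm_nonneg _)
        hsub.eventuallyLE

namespace InH1

variable {z z' y y' : ℝ → ℝ}

theorem sub (hz : InH1 z z') (hy : InH1 y y') : InH1 (z - y) (z' - y') :=
  ⟨fun x hx => (hz.1 x hx).sub (hy.1 x hx), hz.2.1.sub hy.2.1, hz.2.2.sub hy.2.2⟩

theorem continuousOn (hz : InH1 z z') : ContinuousOn z (Ioi 0) :=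
  fun x hx => (hz.1 x hx).continuousAt.continuousWithinAt

theorem exists_sq_le (hz : InH1 z z') : ∃ C, ∀ x ∈ Ioi (0:ℝ), z x ^ 2 ≤ C := by
  have hderiv : ∀ x ∈ Ioi (0:ℝ), HasDerivAt (fun t => z t ^ 2) (2 * z x * z' x) x :=
    fun x hx => ((hz.1 x hx).pow 2).congr_deriv (by ring)
  have hderiv_int : Integrable (fun x => 2 * z x * z' x) (volume.restrict (Ioi 0)) := by
    simpa only [Pi.mul_apply, mul_assoc] using (hz.2.1.integrable_mul hz.2.2).const_mul 2
  refine ⟨∫ t in Ioi (0:ℝ), ‖2 * z t * z' t‖, fun x hx => ?_⟩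
  have :=
    norm_le_integral_norm_deriv_of_integrableOn_Ioi hderiv hderiv_int hz.2.1.integrable_sq hx
  rwa [Real.norm_of_nonneg (sq_nonneg _)] at this

theorem integrable_cube_mul (hz : InH1 z z') (hy : MemLp y 2 (volume.restrict (Ioi 0))) :
    Integrable (fun x => z x ^ 3 * y x) (volume.restrict (Ioi 0)) := by
  obtain ⟨C, hC⟩ := hz.exists_sq_le
  have hbdd : ∀ᵐ x ∂(volume.restrict (Ioi (0:ℝ))), ‖z x ^ 2‖ ≤ C := by
    filter_upwards [ae_restrict_mem measurableSet_Ioi] with x hx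
    rw [Real.norm_of_nonneg (sq_nonneg _)]
    exact hC x hx
  have := (hz.2.1.integrable_mul hy).bdd_mul
    ((hz.continuousOn.pow 2).aestronglyMeasurable measurableSet_Ioi) hbdd
  simpa only [Pi.mul_apply, Pi.pow_apply, ← mul_assoc, ← pow_succ] using this

end InH1

def weakIntegrand (γ : ℝ) (u v v' φ φ' : ℝ → ℝ) (x : ℝ) : ℝ :=
  v' x * φ' x + γ * v x * φ x + v x ^ 3 * φ x - u x * φ x

theorem integrable_weakIntegrand (γ : ℝ) {u v v' φ φ' : ℝ → ℝ}
    (hu : MemLp u 2 (volume.restrict (Ioi 0))) (hv : InH1 v v')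
    (hφ : MemLp φ 2 (volume.restrict (Ioi 0))) (hφ' : MemLp φ' 2 (volume.restrict (Ioi 0))) :
    Integrable (weakIntegrand γ u v v' φ φ') (volume.restrict (Ioi 0)) := by
  have hgrad : Integrable (fun x => v' x * φ' x) (volume.restrict (Ioi 0)) :=
    hv.2.2.integrable_mul hφ'
  have hmass : Integrable (fun x => γ * v x * φ x) (volume.restrict (Ioi 0)) := by
    simpa only [Pi.mul_apply, mul_assoc] using (hv.2.1.integrable_mul hφ).const_mul γ
  have hsource : Integrable (fun x => u x * φ x) (volume.restrict (Ioi 0)) :=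
    hu.integrable_mul hφ
  exact ((hgrad.add hmass).add (hv.integrable_cube_mul hφ)).sub hsource

theorem weakIntegrand_sub_weakIntegrand (γ : ℝ) (u v₁ v₁' v₂ v₂' : ℝ → ℝ) (x : ℝ) :
    weakIntegrand γ u v₁ v₁' (v₁ - v₂) (v₁' - v₂') x
      - weakIntegrand γ u v₂ v₂' (v₁ - v₂) (v₁' - v₂') x
      = (v₁' x - v₂' x) ^ 2 + γ * (v₁ x - v₂ x) ^ 2
        + (v₁ x ^ 3 - v₂ x ^ 3) * (v₁ x - v₂ x) := by
  simp only [weakIntegrand, Pi.sub_apply]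
  ring

theorem mul_sq_sub_le_weakIntegrand_sub {γ : ℝ} (u v₁ v₁' v₂ v₂' : ℝ → ℝ) (x : ℝ) :
    γ * (v₁ x - v₂ x) ^ 2 ≤ weakIntegrand γ u v₁ v₁' (v₁ - v₂) (v₁' - v₂') x
      - weakIntegrand γ u v₂ v₂' (v₁ - v₂) (v₁' - v₂') x := by
  rw [weakIntegrand_sub_weakIntegrand]
  nlinarith [sq_nonneg (v₁' x - v₂' x), cube_sub_cube_mul_sub_nonneg (v₁ x) (v₂ x)]

/-- For `γ > 0`, if `v₁, v₂ ∈ H¹(0,∞)` are both weak solutions of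
`v'' − γv − v³ + u = 0` for the same `u ∈ H¹(0,∞)`, then `v₁ = v₂` on `(0,∞)`. -/
theorem statement4
    (γ : ℝ) (hγ : 0 < γ) (u u' v₁ v₁' v₂ v₂' : ℝ → ℝ)
    (hu : InH1 u u') (hv₁ : InH1 v₁ v₁') (hv₂ : InH1 v₂ v₂')
    (hweak₁ : ∀ φ φ' : ℝ → ℝ, InH1 φ φ' →
      ∫ x in Ioi (0:ℝ), (v₁' x * φ' x + γ * v₁ x * φ x + v₁ x ^ 3 * φ x - u x * φ x) = 0)
    (hweak₂ : ∀ φ φ' : ℝ → ℝ, InH1 φ φ' →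
      ∫ x in Ioi (0:ℝ), (v₂' x * φ' x + γ * v₂ x * φ x + v₂ x ^ 3 * φ x - u x * φ x) = 0) :
    ∀ x ∈ Ioi (0:ℝ), v₁ x = v₂ x := by
  have hw : InH1 (v₁ - v₂) (v₁' - v₂') := hv₁.sub hv₂
  set e := fun x => weakIntegrand γ u v₁ v₁' (v₁ - v₂) (v₁' - v₂') x
      - weakIntegrand γ u v₂ v₂' (v₁ - v₂) (v₁' - v₂') x
  have hint₁ := integrable_weakIntegrand γ hu.2.1 hv₁ hw.2.1 hw.2.2
  have hint₂ := integrable_weakIntegrand γ hu.2.1 hv₂ hw.2.1 hw.2.2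
  have he_le : ∀ x, γ * (v₁ x - v₂ x) ^ 2 ≤ e x := mul_sq_sub_le_weakIntegrand_sub u v₁ v₁' v₂ v₂'
  have he_zero : ∫ x in Ioi (0:ℝ), e x = 0 := by
    rw [integral_sub hint₁ hint₂]
    simp only [weakIntegrand, hweak₁ _ _ hw, hweak₂ _ _ hw, sub_zero]
  have he_ae : e =ᵐ[volume.restrict (Ioi 0)] 0 :=
    (integral_eq_zero_iff_of_nonneg (fun x => (by positivity : 0 ≤ γ * _).trans (he_le x))
      (hint₁.sub hint₂)).1 he_zero
  have hv_ae : v₁ =ᵐ[volume.restrict (Ioi 0)] v₂ := he_ae.mono fun x hx => by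
    have := he_le x
    rw [hx, Pi.zero_apply] at this
    exact sub_eq_zero.1 <| (pow_eq_zero_iff two_ne_zero).1 <|
      le_antisymm (nonpos_of_mul_nonpos_right this hγ) (sq_nonneg _)
  exact Measure.eqOn_open_of_ae_eq hv_ae isOpen_Ioi hv₁.continuousOn hv₂.continuousOn
end

section
/- Let γ > 0 and let N : H^1(0,∞) → H^3(0,∞) map w to the unique solution v of v'' − γv − v³ + w = 0 with v'(0)=0 and v → 0 at infinity. Then ‖Nw‖_{H^1(0,∞)} ≤ max{1, 1/γ} · ‖w‖_{L^2(0,∞)} for all w ∈ H^1(0,∞). -/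
/-!
Multiplying the equation by `v` and integrating over `(0, ∞)` gives the energy identity
`∫ v'² + γ ∫ v² + ∫ v⁴ = ∫ w v`; the boundary term `v v'` vanishes at `0` by the Neumann
condition and at infinity because both `v v'` and its derivative are integrable.
With `M = max 1 (1/γ)` we have `M ≥ 1` and `M γ ≥ 1`, so dropping `∫ v⁴` and using
`2 M ∫ w v ≤ M² ∫ w² + ∫ v²` gives `∫ v² + ∫ v'² ≤ M² ∫ w²`.
-/

open MeasureTheory Set Filter Topology

lemma exists_abs_le_on_Ici_of_tendsto {f : ℝ → ℝ} {a l : ℝ} (hf : ContinuousOn f (Ici a))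
    (hlim : Tendsto f atTop (𝓝 l)) : ∃ C, ∀ x ∈ Ici a, |f x| ≤ C := by
  obtain ⟨R, hR⟩ :=
    eventually_atTop.1 (hlim.abs.eventually (eventually_le_nhds (lt_add_one |l|)))
  obtain ⟨C, hC⟩ := isCompact_Icc.exists_bound_of_continuousOn
    (hf.mono (Icc_subset_Ici_self : Icc a (max R a) ⊆ Ici a))
  refine ⟨max C (|l| + 1), fun x hx => ?_⟩
  rcases le_total x (max R a) with h | h
  · exact (hC x ⟨hx, h⟩).trans (le_max_left _ _)
  · exact (hR x ((le_max_left R a).trans h)).trans (le_max_right _ _)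

lemma integral_Ioi_deriv_eq_neg_of_integrableOn {f f' : ℝ → ℝ} {a : ℝ}
    (hderiv : ∀ x ∈ Ici a, HasDerivAt f (f' x) x) (hf' : IntegrableOn f' (Ioi a))
    (hf : IntegrableOn f (Ioi a)) : ∫ x in Ioi a, f' x = -f a := by
  have hlim := tendsto_zero_of_hasDerivAt_of_integrableOn_Ioi
    (fun x hx => hderiv x (Ioi_subset_Ici_self hx)) hf' hf
  rw [integral_Ioi_of_hasDerivAt_of_tendsto' hderiv hf' hlim, zero_sub]

section

variable {α : Type*} [MeasurableSpace α] {μ : Measure α}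

lemma MeasureTheory.MemLp.integrable_pow_four_of_ae_abs_le {f : α → ℝ} {C : ℝ}
    (hf : MemLp f 2 μ) (hC : ∀ᵐ x ∂μ, |f x| ≤ C) : Integrable (fun x => f x ^ 4) μ := by
  have hbdd : ∀ᵐ x ∂μ, ‖f x ^ 2‖ ≤ C ^ 2 := by
    filter_upwards [hC] with x hx
    rw [norm_pow, Real.norm_eq_abs]
    exact pow_le_pow_left₀ (abs_nonneg _) hx 2
  convert hf.integrable_sq.bdd_mul (hf.1.pow 2) hbdd using 2 with x
  simp only [Pi.pow_apply]
  ring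

lemma two_mul_integral_mul_le {f g : α → ℝ} (c : ℝ) (hf : MemLp f 2 μ) (hg : MemLp g 2 μ) :
    2 * c * ∫ x, f x * g x ∂μ ≤ c ^ 2 * ∫ x, f x ^ 2 ∂μ + ∫ x, g x ^ 2 ∂μ := by
  calc 2 * c * ∫ x, f x * g x ∂μ
      = ∫ x, 2 * c * (f x * g x) ∂μ := (integral_const_mul _ _).symm
    _ ≤ ∫ x, (c ^ 2 * f x ^ 2 + g x ^ 2) ∂μ := by
        refine integral_mono ((hf.integrable_mul hg).const_mul _)
          ((hf.integrable_sq.const_mul _).add hg.integrable_sq) fun x => ?_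
        nlinarith [sq_nonneg (c * f x - g x)]
    _ = c ^ 2 * ∫ x, f x ^ 2 ∂μ + ∫ x, g x ^ 2 ∂μ := by
        rw [integral_add (hf.integrable_sq.const_mul _) hg.integrable_sq, integral_const_mul]

end

lemma integral_Ioi_energy_eq {γ a : ℝ} {w v v' v'' : ℝ → ℝ}
    (hderiv : ∀ x ∈ Ici a, HasDerivAt v (v' x) x)
    (hderiv' : ∀ x ∈ Ici a, HasDerivAt v' (v'' x) x)
    (heq : ∀ x ∈ Ici a, v'' x - γ * v x - v x ^ 3 + w x = 0) (hneu : v' a = 0)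
    (hw : MemLp w 2 (volume.restrict (Ioi a))) (hv : MemLp v 2 (volume.restrict (Ioi a)))
    (hv' : MemLp v' 2 (volume.restrict (Ioi a))) (hv4 : IntegrableOn (fun x => v x ^ 4) (Ioi a)) :
    (∫ x in Ioi a, v' x ^ 2) + γ * (∫ x in Ioi a, v x ^ 2) + ∫ x in Ioi a, v x ^ 4 =
      ∫ x in Ioi a, w x * v x := by
  have hsq : IntegrableOn (fun x => v' x ^ 2 + γ * v x ^ 2) (Ioi a) :=
    hv'.integrable_sq.add (hv.integrable_sq.const_mul γ)
  have hwv : IntegrableOn (fun x => w x * v x) (Ioi a) := hw.integrable_mul hv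
  have hlhs : IntegrableOn (fun x => v' x ^ 2 + γ * v x ^ 2 + v x ^ 4) (Ioi a) := hsq.add hv4
  have hprod : ∀ x ∈ Ici a, HasDerivAt (fun y => v y * v' y)
      (v' x ^ 2 + γ * v x ^ 2 + v x ^ 4 - w x * v x) x := fun x hx =>
    ((hderiv x hx).mul (hderiv' x hx)).congr_deriv (by linear_combination v x * heq x hx)
  have hboundary := integral_Ioi_deriv_eq_neg_of_integrableOn hprod
    (hlhs.sub hwv) (hv.integrable_mul hv')
  rw [hneu, mul_zero, neg_zero, integral_sub hlhs hwv, integral_add hsq hv4,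
    integral_add hv'.integrable_sq (hv.integrable_sq.const_mul γ), integral_const_mul] at hboundary
  linarith

theorem statement5_general
    (γ : ℝ) (hγ : 0 < γ) (w v v' v'' : ℝ → ℝ)
    (hw : MemLp w 2 (volume.restrict (Ioi (0:ℝ))))
    (hderiv : ∀ x ∈ Ici (0:ℝ), HasDerivAt v (v' x) x)
    (hderiv' : ∀ x ∈ Ici (0:ℝ), HasDerivAt v' (v'' x) x)
    (heq : ∀ x ∈ Ici (0:ℝ), v'' x - γ * v x - v x ^ 3 + w x = 0)
    (hneu : v' 0 = 0)
    (hdecay : Tendsto v atTop (nhds 0))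
    (hv : MemLp v 2 (volume.restrict (Ioi (0:ℝ))))
    (hv' : MemLp v' 2 (volume.restrict (Ioi (0:ℝ)))) :
    Real.sqrt ((∫ x in Ioi (0:ℝ), v x ^ 2) + ∫ x in Ioi (0:ℝ), v' x ^ 2) ≤
      max 1 (1 / γ) * Real.sqrt (∫ x in Ioi (0:ℝ), w x ^ 2) := by
  obtain ⟨C, hC⟩ := exists_abs_le_on_Ici_of_tendsto
    (fun x hx => (hderiv x hx).continuousAt.continuousWithinAt) hdecay
  have hv4 : IntegrableOn (fun x => v x ^ 4) (Ioi 0) :=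
    hv.integrable_pow_four_of_ae_abs_le ((ae_restrict_mem measurableSet_Ioi).mono
      fun x hx => hC x (Ioi_subset_Ici_self hx))
  have henergy := integral_Ioi_energy_eq hderiv hderiv' heq hneu hw hv hv' hv4
  set M := max 1 (1 / γ)
  have hAMGM := two_mul_integral_mul_le M hw hv
  have hM : 1 ≤ M := le_max_left _ _
  have hMγ : 1 ≤ M * γ := by
    calc (1 : ℝ) = 1 / γ * γ := by field_simp
      _ ≤ M * γ := by gcongr; exact le_max_right _ _
  have hA : 0 ≤ ∫ x in Ioi (0:ℝ), v x ^ 2 := integral_nonneg fun x => sq_nonneg _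
  have hB : 0 ≤ ∫ x in Ioi (0:ℝ), v' x ^ 2 := integral_nonneg fun x => sq_nonneg _
  have hQ : 0 ≤ ∫ x in Ioi (0:ℝ), v x ^ 4 := integral_nonneg fun x => by positivity
  have hW : 0 ≤ ∫ x in Ioi (0:ℝ), w x ^ 2 := integral_nonneg fun x => sq_nonneg _
  calc _ ≤ Real.sqrt ((M * Real.sqrt (∫ x in Ioi (0:ℝ), w x ^ 2)) ^ 2) := by
        refine Real.sqrt_le_sqrt ?_
        rw [mul_pow, Real.sq_sqrt hW]
        nlinarith [mul_le_mul_of_nonneg_right hMγ hA, mul_le_mul_of_nonneg_right hM hB,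
          mul_nonneg (zero_le_one.trans hM) hQ]
    _ = M * Real.sqrt (∫ x in Ioi (0:ℝ), w x ^ 2) := Real.sqrt_sq (by positivity)

/-- Let `γ > 0` and let `v = Nw` be the solution of
`v'' − γv − v³ + w = 0` on `(0,∞)` with `v'(0) = 0` and decay at infinity.  Then
`‖Nw‖_{H¹(0,∞)} ≤ max{1, 1/γ} ‖w‖_{L²(0,∞)}`. -/
theorem statement5
    (γ : ℝ) (hγ : 0 < γ) (w v v' v'' : ℝ → ℝ)
    (hw : MemLp w 2 (volume.restrict (Ioi (0:ℝ))))
    (hwH1 : ∃ w' : ℝ → ℝ, (∀ x ∈ Ioi (0:ℝ), HasDerivAt w (w' x) x) ∧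
      MemLp w' 2 (volume.restrict (Ioi (0:ℝ))))
    (hderiv : ∀ x ∈ Ici (0:ℝ), HasDerivAt v (v' x) x)
    (hderiv' : ∀ x ∈ Ici (0:ℝ), HasDerivAt v' (v'' x) x)
    (heq : ∀ x ∈ Ici (0:ℝ), v'' x - γ * v x - v x ^ 3 + w x = 0)
    (hneu : v' 0 = 0)
    (hdecay : Tendsto v atTop (nhds 0))
    (hv : MemLp v 2 (volume.restrict (Ioi (0:ℝ))))
    (hv' : MemLp v' 2 (volume.restrict (Ioi (0:ℝ)))) :
    Real.sqrt ((∫ x in Ioi (0:ℝ), v x ^ 2) + ∫ x in Ioi (0:ℝ), v' x ^ 2) ≤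
      max 1 (1 / γ) * Real.sqrt (∫ x in Ioi (0:ℝ), w x ^ 2) :=
  statement5_general γ hγ w v v' v'' hw hderiv hderiv' heq hneu hdecay hv hv'
end

section
/- Let γ > 0, 0 ≤ x ≤ x₂ ≤ ∞, and let g be a measurable function with 0 ≤ g ≤ M+1 supported in [x₂, ∞). Then for the Green's operator L of (−d²/dx² + γ) with Neumann condition at 0, the bound (Lg)(x) ≤ ((M+1)/γ) e^{−√γ x₂} cosh(√γ x) holds for all 0 ≤ x ≤ x₂, and consequently ∫₀^{x₂} Lg dx ≤ (M+1)/(2γ^{3/2}). -/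
/-
For `s ≥ x₂ ≥ x` the kernel is `e^{−√γ s} cosh(√γ x)/√γ`, and `g` vanishes below `x₂`, so bounding
`g` by `M+1` and integrating `e^{−√γ s}` over `(x₂, ∞)` gives the pointwise bound. Integrating `cosh(√γ x)` over `[0, x₂]`
produces `sinh(√γ x₂)/√γ`, and `e^{−t} sinh t = (1 − e^{−2t})/2 ≤ 1/2`.
-/

open MeasureTheory Set Filter Real

/-- The Green's kernel `G(x,s) = (1/√γ) e^{−√γ max(x,s)} cosh(√γ min(x,s))`. -/
noncomputable def G (γ x s : ℝ) : ℝ :=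
  (1 / Real.sqrt γ) * Real.exp (-(Real.sqrt γ * max x s)) * Real.cosh (Real.sqrt γ * min x s)

/-- The Green's operator `(Lw)(x) = ∫₀^∞ G(x,s) w(s) ds`. -/
noncomputable def Lop (γ : ℝ) (w : ℝ → ℝ) (x : ℝ) : ℝ :=
  ∫ s in Ioi (0:ℝ), G γ x s * w s

lemma integral_cosh_mul {a : ℝ} (ha : a ≠ 0) (c : ℝ) :
    ∫ x in (0:ℝ)..c, cosh (a * x) = sinh (a * c) / a := by
  have hderiv : ∀ x ∈ uIcc (0:ℝ) c,
      HasDerivAt (fun x => sinh (a * x) / a) (cosh (a * x)) x := fun x _ => by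
    simpa [mul_comm, ha] using ((hasDerivAt_id x).const_mul a).sinh.div_const a
  rw [intervalIntegral.integral_eq_sub_of_hasDerivAt hderiv
    (Continuous.intervalIntegrable (by fun_prop) _ _)]
  simp

lemma exp_neg_mul_sinh_le_half (t : ℝ) : exp (-t) * sinh t ≤ 1 / 2 := by
  have h : exp (-t) * sinh t = (1 - exp (-t) ^ 2) / 2 := by
    rw [sinh_eq, exp_neg]
    field_simp
  rw [h]
  linarith [sq_nonneg (exp (-t))]

section Green

variable {γ x s c K : ℝ} {w : ℝ → ℝ}

lemma G_nonneg : 0 ≤ G γ x s := by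
  unfold G
  have := cosh_pos (√γ * min x s)
  positivity

lemma G_of_le (h : x ≤ s) : G γ x s = exp (-(√γ * s)) * cosh (√γ * x) / √γ := by
  rw [G, max_eq_right h, min_eq_left h]
  ring

lemma Lop_nonneg (hw : ∀ s, 0 ≤ w s) : 0 ≤ Lop γ w x :=
  integral_nonneg fun s => mul_nonneg G_nonneg (hw s)

lemma Lop_eq_setIntegral_Ioi (hc : 0 ≤ c) (hsupp : ∀ s, s < c → w s = 0) :
    Lop γ w x = ∫ s in Ioi c, G γ x s * w s := by
  refine setIntegral_eq_of_subset_of_ae_sdiff_eq_zero measurableSet_Ioi.nullMeasurableSet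
    (Ioi_subset_Ioi hc) ?_
  filter_upwards [compl_mem_ae_iff.2 (measure_singleton c)] with s hs hmem
  have hsc : s < c := lt_of_le_of_ne (not_lt.1 hmem.2) hs
  rw [hsupp s hsc, mul_zero]

lemma Lop_le_of_support (hγ : 0 < γ) (hc : 0 ≤ c) (hx : x ≤ c) (hw : ∀ s, 0 ≤ w s)
    (hwK : ∀ s, w s ≤ K) (hsupp : ∀ s, s < c → w s = 0) :
    Lop γ w x ≤ K / γ * exp (-(√γ * c)) * cosh (√γ * x) := by
  have ha : 0 < √γ := sqrt_pos.2 hγ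
  have hbound : ∀ s ∈ Ioi c, G γ x s * w s ≤ K * cosh (√γ * x) / √γ * exp (-√γ * s) := by
    intro s hs
    rw [G_of_le (hx.trans (le_of_lt hs))]
    have := cosh_pos (√γ * x)
    calc exp (-(√γ * s)) * cosh (√γ * x) / √γ * w s
        ≤ exp (-(√γ * s)) * cosh (√γ * x) / √γ * K := by gcongr; exact hwK s
      _ = K * cosh (√γ * x) / √γ * exp (-√γ * s) := by rw [neg_mul]; ring
  have hexp : ∫ s in Ioi c, exp (-√γ * s) = exp (-(√γ * c)) / √γ := by
    rw [integral_exp_mul_Ioi (neg_lt_zero.2 ha), neg_div_neg_eq, neg_mul]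
  calc Lop γ w x = ∫ s in Ioi c, G γ x s * w s := Lop_eq_setIntegral_Ioi hc hsupp
    _ ≤ ∫ s in Ioi c, K * cosh (√γ * x) / √γ * exp (-√γ * s) :=
        integral_mono_of_nonneg (Eventually.of_forall fun s => mul_nonneg G_nonneg (hw s))
          ((integrableOn_exp_mul_Ioi (neg_lt_zero.2 ha) c).const_mul _)
          ((ae_restrict_iff' measurableSet_Ioi).2 (Eventually.of_forall hbound))
    _ = K / γ * exp (-(√γ * c)) * cosh (√γ * x) := by
        rw [integral_const_mul, hexp]
        field_simp
        rw [sq_sqrt hγ.le]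

lemma intervalIntegral_Lop_le (hγ : 0 < γ) (hc : 0 ≤ c) (hw : ∀ s, 0 ≤ w s)
    (hwK : ∀ s, w s ≤ K) (hsupp : ∀ s, s < c → w s = 0) :
    ∫ x in (0:ℝ)..c, Lop γ w x ≤ K / (2 * γ * √γ) := by
  have ha : 0 < √γ := sqrt_pos.2 hγ
  have hK : 0 ≤ K := (hw 0).trans (hwK 0)
  have hpointwise : ∀ x ∈ Ioc 0 c, Lop γ w x ≤ K / γ * exp (-(√γ * c)) * cosh (√γ * x) :=
    fun x hx => Lop_le_of_support hγ hc hx.2 hw hwK hsupp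
  have hmono : ∫ x in (0:ℝ)..c, Lop γ w x
      ≤ ∫ x in (0:ℝ)..c, K / γ * exp (-(√γ * c)) * cosh (√γ * x) := by
    simp only [intervalIntegral.integral_of_le hc]
    exact integral_mono_of_nonneg (Eventually.of_forall fun x => Lop_nonneg hw)
      (Continuous.integrableOn_Ioc (by fun_prop))
      ((ae_restrict_iff' measurableSet_Ioc).2 (Eventually.of_forall hpointwise))
  calc ∫ x in (0:ℝ)..c, Lop γ w x
      ≤ K / γ * exp (-(√γ * c)) * (sinh (√γ * c) / √γ) := by
        rwa [intervalIntegral.integral_const_mul, integral_cosh_mul ha.ne'] at hmono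
    _ = K / (γ * √γ) * (exp (-(√γ * c)) * sinh (√γ * c)) := by ring
    _ ≤ K / (γ * √γ) * (1 / 2) := by gcongr; exact exp_neg_mul_sinh_le_half _
    _ = K / (2 * γ * √γ) := by ring

end Green

theorem statement11_general
    (γ : ℝ) (hγ : 0 < γ) (M x₂ : ℝ) (hx₂ : 0 ≤ x₂)
    (g : ℝ → ℝ)
    (hg : ∀ s, 0 ≤ g s ∧ g s ≤ M + 1)
    (hsupp : ∀ s, s < x₂ → g s = 0) :
    (∀ x ∈ Icc (0:ℝ) x₂,
      Lop γ g x ≤ (M + 1) / γ * Real.exp (-(Real.sqrt γ * x₂)) * Real.cosh (Real.sqrt γ * x)) ∧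
    (∫ x in (0:ℝ)..x₂, Lop γ g x) ≤ (M + 1) / (2 * γ * Real.sqrt γ) :=
  ⟨fun _ hx => Lop_le_of_support hγ hx₂ hx.2 (fun s => (hg s).1) (fun s => (hg s).2) hsupp,
    intervalIntegral_Lop_le hγ hx₂ (fun s => (hg s).1) (fun s => (hg s).2) hsupp⟩

/-- For `γ > 0` and `g` measurable with `0 ≤ g ≤ M+1` supported in
`[x₂,∞)`, one has `(Lg)(x) ≤ ((M+1)/γ) e^{−√γ x₂} cosh(√γ x)` for `0 ≤ x ≤ x₂`, and
`∫₀^{x₂} Lg ≤ (M+1)/(2γ^{3/2})`. -/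
theorem statement11
    (γ : ℝ) (hγ : 0 < γ) (M x₂ : ℝ) (hx₂ : 0 ≤ x₂)
    (g : ℝ → ℝ) (hm : Measurable g)
    (hg : ∀ s, 0 ≤ g s ∧ g s ≤ M + 1)
    (hsupp : ∀ s, s < x₂ → g s = 0) :
    (∀ x ∈ Icc (0:ℝ) x₂,
      Lop γ g x ≤ (M + 1) / γ * Real.exp (-(Real.sqrt γ * x₂)) * Real.cosh (Real.sqrt γ * x)) ∧
    (∫ x in (0:ℝ)..x₂, Lop γ g x) ≤ (M + 1) / (2 * γ * Real.sqrt γ) :=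
  statement11_general γ hγ M x₂ hx₂ g hg hsupp
end
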